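/- For T > 0 and z, w ∈ Δ, the kernel K₀(z,w;T) = (z w̄/π) e^{-(z² + w̄²)/(4T)} (1/(z² + w̄²)² + 1/(4T(z² + w̄²))) is positive semidefinite on Δ: for any z₁,…,z_N ∈ Δ and c₁,…,c_N ∈ ℂ, Σ_{j,k} c_j c̄_k K₀(z_j, z_k; T) ≥ 0. -/

import Mathlib

/-!
With `a = z² + w̄²` and `b = 1/(4T)`, the kernel is a Laplace transform,
`∫₀^∞ (s + b) e^{-a s} ds = 1/a² + b/a`, and the integrand factors as `φ_z(s) · conj (φ_w(s))`
with `φ_z(s) = z e^{-z²/(4T)} π^{-1/2} √(s + b) e^{-z² s}`. So `K₀` is a Gram kernel in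
`L²(0, ∞)` and `∑ c_j c̄_k K₀(z_j, z_k) = ∫₀^∞ |∑ c_j φ_{z_j}(s)|² ds ≥ 0`. On the sector
`|arg z| < π/4` one has `Re z² > 0`, which makes all these integrals converge.
-/

open Complex ComplexOrder

/-- The kernel `K₀(z,w;T)` on the sector `Δ`. -/
noncomputable def K0 (z w : ℂ) (T : ℝ) : ℂ :=
  (z * (starRingEnd ℂ) w / (Real.pi : ℂ)) *
    Complex.exp (-(z ^ 2 + ((starRingEnd ℂ) w) ^ 2) / (4 * (T : ℂ))) *
    (1 / (z ^ 2 + ((starRingEnd ℂ) w) ^ 2) ^ 2 +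
      1 / (4 * (T : ℂ) * (z ^ 2 + ((starRingEnd ℂ) w) ^ 2)))

open MeasureTheory Set Filter Topology ComplexConjugate

theorem sum_sum_mul_conj_mul_integral_nonneg {α ι : Type*} [MeasurableSpace α] [Fintype ι]
    {μ : Measure α} (f : ι → α → ℂ)
    (hf : ∀ i j, Integrable (fun x => f i x * conj (f j x)) μ) (c : ι → ℂ) :
    0 ≤ ∑ i, ∑ j, c i * conj (c j) * ∫ x, f i x * conj (f j x) ∂μ := by
  have hsum : ∑ i, ∑ j, c i * conj (c j) * ∫ x, f i x * conj (f j x) ∂μ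
      = ∫ x, ((normSq (∑ i, c i * f i x) : ℝ) : ℂ) ∂μ := by
    have hint : ∀ i j, Integrable (fun x => c i * f i x * conj (c j * f j x)) μ := fun i j => by
      simpa only [map_mul, mul_mul_mul_comm] using (hf i j).const_mul (c i * conj (c j))
    simp_rw [← mul_conj, map_sum, Finset.sum_mul_sum]
    rw [integral_finsetSum _ fun i _ => integrable_finsetSum _ fun j _ => hint i j]
    refine Finset.sum_congr rfl fun i _ => ?_
    rw [integral_finsetSum _ fun j _ => hint i j]
    refine Finset.sum_congr rfl fun j _ => ?_
    rw [← integral_const_mul]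
    simp only [map_mul, mul_mul_mul_comm]
  rw [hsum, integral_complex_ofReal]
  exact zero_le_real.2 (integral_nonneg fun _ => normSq_nonneg _)

theorem re_sq_pos_of_abs_arg_lt {z : ℂ} (hz : z ≠ 0) (harg : |arg z| < Real.pi / 4) :
    0 < (z ^ 2).re := by
  have hre : (z ^ 2).re = ‖z‖ ^ 2 * Real.cos (2 * arg z) := by
    conv_lhs => rw [← norm_mul_exp_arg_mul_I z]
    rw [mul_pow, ← Complex.exp_nat_mul, ← ofReal_pow, re_ofReal_mul]
    push_cast
    rw [← mul_assoc, ← ofReal_ofNat, ← ofReal_mul, exp_ofReal_mul_I_re]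
  have hcos : 0 < Real.cos (2 * arg z) := by
    apply Real.cos_pos_of_mem_Ioo
    constructor <;> linarith [abs_lt.1 harg]
  rw [hre]
  positivity

section Laplace

variable {a : ℂ}

theorem norm_ofReal_pow_mul_cexp_neg_mul {s : ℝ} (hs : 0 ≤ s) (n : ℕ) :
    ‖(s : ℂ) ^ n * cexp (-(a * s))‖ = s ^ n * Real.exp (-a.re * s) := by
  simp [norm_exp, abs_of_nonneg hs]

theorem integrableOn_ofReal_pow_mul_cexp_neg_mul (ha : 0 < a.re) (n : ℕ) :
    IntegrableOn (fun s : ℝ => (s : ℂ) ^ n * cexp (-(a * s))) (Ioi 0) := by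
  have hdom := integrableOn_rpow_mul_exp_neg_mul_rpow (s := n) (p := 1)
    (by linarith [n.cast_nonneg (α := ℝ)]) one_pos ha
  refine hdom.mono' (by fun_prop) ((ae_restrict_iff' measurableSet_Ioi).2 (ae_of_all _ ?_))
  intro s hs
  rw [norm_ofReal_pow_mul_cexp_neg_mul (le_of_lt hs), Real.rpow_natCast, Real.rpow_one]

theorem tendsto_ofReal_pow_mul_cexp_neg_mul_atTop (ha : 0 < a.re) (n : ℕ) :
    Tendsto (fun s : ℝ => (s : ℂ) ^ n * cexp (-(a * s))) atTop (𝓝 0) := by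
  rw [tendsto_zero_iff_norm_tendsto_zero]
  refine (tendsto_rpow_mul_exp_neg_mul_atTop_nhds_zero n _ ha).congr' ?_
  filter_upwards [eventually_ge_atTop 0] with s hs
  rw [norm_ofReal_pow_mul_cexp_neg_mul hs, Real.rpow_natCast, neg_mul]

theorem integrableOn_add_mul_cexp_neg_mul (ha : 0 < a.re) (b : ℂ) :
    IntegrableOn (fun s : ℝ => ((s : ℂ) + b) * cexp (-(a * s))) (Ioi 0) :=
  ((integrableOn_ofReal_pow_mul_cexp_neg_mul ha 1).add
    ((integrableOn_ofReal_pow_mul_cexp_neg_mul ha 0).const_mul b)).congr_fun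
    (fun s _ => by simp only [Pi.add_apply]; ring) measurableSet_Ioi

theorem integral_Ioi_add_mul_cexp_neg_mul (ha : 0 < a.re) (b : ℂ) :
    ∫ s in Ioi (0 : ℝ), ((s : ℂ) + b) * cexp (-(a * s)) = 1 / a ^ 2 + b / a := by
  have ha0 : a ≠ 0 := fun h => by simp [h] at ha
  set F : ℝ → ℂ := fun s => -(((s : ℂ) + b) / a + 1 / a ^ 2) * cexp (-(a * s))
  have hderiv : ∀ s : ℝ, HasDerivAt F (((s : ℂ) + b) * cexp (-(a * s))) s := by
    intro s
    have hexp : HasDerivAt (fun s : ℝ => cexp (-(a * s))) (cexp (-(a * s)) * -a) s := by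
      simpa using ((hasDerivAt_id (s : ℂ)).const_mul a).neg.cexp.comp_ofReal
    have hlin : HasDerivAt (fun s : ℝ => -(((s : ℂ) + b) / a + 1 / a ^ 2)) (-(1 / a)) s := by
      simpa using
        ((((hasDerivAt_id (s : ℂ)).add_const b).div_const a).add_const (1 / a ^ 2)).neg.comp_ofReal
    refine (hlin.mul hexp).congr_deriv ?_
    field_simp
    ring
  have hlim : Tendsto F atTop (𝓝 0) := by
    have h := ((tendsto_ofReal_pow_mul_cexp_neg_mul_atTop ha 1).const_mul (-(1 / a))).add
      ((tendsto_ofReal_pow_mul_cexp_neg_mul_atTop ha 0).const_mul (-(b / a + 1 / a ^ 2)))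
    rw [mul_zero, mul_zero, add_zero] at h
    exact h.congr fun s => by simp only [F]; ring
  rw [integral_Ioi_of_hasDerivAt_of_tendsto' (fun s _ => hderiv s)
    (integrableOn_add_mul_cexp_neg_mul ha b) hlim]
  simp only [F, ofReal_zero, zero_add, mul_zero, neg_zero, exp_zero, mul_one, zero_sub, neg_neg]
  ring

end Laplace

noncomputable def K0Feature (T : ℝ) (z : ℂ) (s : ℝ) : ℂ :=
  z * cexp (-z ^ 2 / (4 * T)) / (√Real.pi : ℝ) * (√(s + 1 / (4 * T)) : ℝ) * cexp (-(z ^ 2 * s))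

theorem K0Feature_mul_conj {T s : ℝ} (hs : 0 ≤ s + 1 / (4 * T)) (z w : ℂ) :
    K0Feature T z s * conj (K0Feature T w s) =
      z * conj w * cexp (-(z ^ 2 + conj w ^ 2) / (4 * T)) / Real.pi *
        (((s : ℂ) + (1 / (4 * T) : ℝ)) * cexp (-((z ^ 2 + conj w ^ 2) * s))) := by
  have hsqrt :
      ((√(s + 1 / (4 * T)) : ℝ) : ℂ) * (√(s + 1 / (4 * T)) : ℝ) = s + (1 / (4 * T) : ℝ) := by
    rw [← ofReal_mul, Real.mul_self_sqrt hs, ofReal_add]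
  have hpi : ((√Real.pi : ℝ) : ℂ) * (√Real.pi : ℝ) = Real.pi := by
    rw [← ofReal_mul, Real.mul_self_sqrt Real.pi_pos.le]
  simp only [K0Feature, map_mul, map_div₀, conj_ofReal, ← exp_conj, map_neg, map_pow, map_ofNat]
  rw [← hsqrt, ← hpi, neg_add, add_div, add_mul, neg_add, exp_add, exp_add]
  ring

theorem integral_K0Feature_mul_conj {T : ℝ} (hT : 0 < T) {z w : ℂ}
    (h : 0 < (z ^ 2 + conj w ^ 2).re) :
    IntegrableOn (fun s => K0Feature T z s * conj (K0Feature T w s)) (Ioi 0) ∧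
      ∫ s in Ioi 0, K0Feature T z s * conj (K0Feature T w s) = K0 z w T := by
  have hfeat : EqOn (fun s => K0Feature T z s * conj (K0Feature T w s))
      (fun s : ℝ => z * conj w * cexp (-(z ^ 2 + conj w ^ 2) / (4 * T)) / Real.pi *
        (((s : ℂ) + (1 / (4 * T) : ℝ)) * cexp (-((z ^ 2 + conj w ^ 2) * s)))) (Ioi 0) :=
    fun s hs => K0Feature_mul_conj (by have : (0:ℝ) < s := hs; positivity) z w
  constructor
  · exact IntegrableOn.congr_fun ((integrableOn_add_mul_cexp_neg_mul h _).const_mul _)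
      hfeat.symm measurableSet_Ioi
  · have ha : z ^ 2 + conj w ^ 2 ≠ 0 := fun h0 => by simp [h0] at h
    have hT0 : (T : ℂ) ≠ 0 := ofReal_ne_zero.2 hT.ne'
    rw [setIntegral_congr_fun measurableSet_Ioi hfeat, integral_const_mul,
      integral_Ioi_add_mul_cexp_neg_mul h, K0]
    push_cast
    field_simp

theorem integral_K0Feature_mul_conj_of_abs_arg_lt {T : ℝ} (hT : 0 < T) {z w : ℂ}
    (hz : |arg z| < Real.pi / 4) (hw : |arg w| < Real.pi / 4) :
    IntegrableOn (fun s => K0Feature T z s * conj (K0Feature T w s)) (Ioi 0) ∧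
      ∫ s in Ioi 0, K0Feature T z s * conj (K0Feature T w s) = K0 z w T := by
  rcases eq_or_ne z 0 with rfl | hz0
  · simp [K0Feature, K0]
  rcases eq_or_ne w 0 with rfl | hw0
  · simp [K0Feature, K0]
  refine integral_K0Feature_mul_conj hT ?_
  rw [add_re, ← map_pow, conj_re]
  exact add_pos (re_sq_pos_of_abs_arg_lt hz0 hz) (re_sq_pos_of_abs_arg_lt hw0 hw)

/-- For `T > 0`, `K₀(·,·;T)` is a positive semidefinite kernel on the sector
`Δ = {z : |arg z| < π/4}`. -/
theorem K0_posSemidef (T : ℝ) (hT : 0 < T) (N : ℕ) (z : Fin N → ℂ)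
    (hz : ∀ j, |Complex.arg (z j)| < Real.pi / 4) (c : Fin N → ℂ) :
    0 ≤ ∑ j, ∑ k, c j * (starRingEnd ℂ) (c k) * K0 (z j) (z k) T := by
  have hK := fun j k => integral_K0Feature_mul_conj_of_abs_arg_lt hT (hz j) (hz k)
  simp_rw [← (hK _ _).2]
  exact sum_sum_mul_conj_mul_integral_nonneg _ (fun j k => (hK j k).1) c
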